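/- For all nonnegative integers $n$ and indeterminates $a$: ${}_2\phi_1(q^{-n},q^{1-n};aq;q^2,aq^{2n}) = \frac{(a;q^2)_n}{(a;q)_n}$ as rational functions of $a$ and $q$. -/

import Mathlib

/- The terminating ₂φ₁ summation (3.3)/(2.12) of Berkovich–Warnaar:
`₂φ₁(q^{-n}, q^{1-n}; aq; q², aq^{2n}) = (a;q²)_n / (a;q)_n`,
as an identity of rational functions in `a` and `q`.  We work in the
two-variable rational function field `RatFunc (RatFunc ℚ)` with
`q = C X` and `a = X`. -/

open Finset

noncomputable section

def qPoch {F : Type*} [Field F] (a x : F) (n : ℕ) : F :=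
  ∏ i ∈ Finset.range n, (1 - a * x ^ i)

abbrev F2 : Type := RatFunc (RatFunc ℚ)

def q : F2 := RatFunc.C RatFunc.X
def a : F2 := RatFunc.X

/-! ### Auxiliary material -/

lemma qPoch_zero {F : Type*} [Field F] (a x : F) : qPoch a x 0 = 1 := by
  simp [qPoch]

lemma qPoch_succ {F : Type*} [Field F] (a x : F) (n : ℕ) :
    qPoch a x (n + 1) = qPoch a x n * (1 - a * x ^ n) :=
  Finset.prod_range_succ _ _

lemma q_ne_zero : (q : F2) ≠ 0 := by
  intro h
  have := RingHom.injective (RatFunc.C : RatFunc ℚ →+* F2)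
  have h0 : (RatFunc.X : RatFunc ℚ) = 0 := by
    apply this
    simpa [q, map_zero] using h
  exact RatFunc.X_ne_zero h0

lemma X_pow_ne (i j : ℕ) (h : i ≠ j) :
    (RatFunc.X : RatFunc ℚ) ^ i ≠ RatFunc.X ^ j := by
  intro hEq
  have hX : (RatFunc.X : RatFunc ℚ) = algebraMap (Polynomial ℚ) _ Polynomial.X :=
    (RatFunc.algebraMap_X).symm
  rw [hX, ← map_pow, ← map_pow] at hEq
  have := RatFunc.algebraMap_injective ℚ hEq
  have h2 := congrArg Polynomial.natDegree this
  rw [Polynomial.natDegree_X_pow, Polynomial.natDegree_X_pow] at h2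
  exact h h2

lemma q_pow_ne (i j : ℕ) (h : i ≠ j) : (q : F2) ^ i ≠ q ^ j := by
  intro hEq
  rw [q, ← map_pow, ← map_pow] at hEq
  exact X_pow_ne i j h (RingHom.injective (RatFunc.C : RatFunc ℚ →+* F2) hEq)

lemma one_sub_q_pow_ne (m : ℕ) (hm : m ≠ 0) : (1 : F2) - q ^ m ≠ 0 := by
  have := q_pow_ne 0 m (by omega)
  rw [pow_zero] at this
  exact sub_ne_zero_of_ne this

lemma one_sub_a_q_pow_ne (m : ℕ) : (1 : F2) - a * q ^ m ≠ 0 := by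
  have heq : (1 : F2) - a * q ^ m =
      algebraMap (Polynomial (RatFunc ℚ)) F2
        (1 - Polynomial.X * Polynomial.C (RatFunc.X ^ m)) := by
    rw [map_sub, map_one, map_mul, RatFunc.algebraMap_X, RatFunc.algebraMap_C]
    rw [q, a, map_pow]
  rw [heq]
  apply RatFunc.algebraMap_ne_zero
  intro h
  have h1 := congrArg (fun p => Polynomial.coeff p 1) h
  beta_reduce at h1
  rw [Polynomial.coeff_zero, Polynomial.coeff_sub, Polynomial.coeff_one] at h1
  rw [show (1:ℕ) = 0 + 1 from rfl, Polynomial.coeff_X_mul, Polynomial.coeff_C_zero] at h1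
  simp at h1
  exact RatFunc.X_ne_zero h1.1

/-- `E n m = ∏_{j<m} (q^n - q^j)`. -/
def E (n m : ℕ) : F2 := ∏ j ∈ Finset.range m, (q ^ n - q ^ j)

lemma E_zero (n : ℕ) : E n 0 = 1 := by simp [E]

lemma E_succ (n m : ℕ) : E n (m + 1) = E n m * (q ^ n - q ^ m) :=
  Finset.prod_range_succ _ _

lemma E_shift (n m : ℕ) : E (n + 1) (m + 1) = (q ^ (n + 1) - 1) * q ^ m * E n m := by
  rw [E, Finset.prod_range_succ']
  have h : ∀ j : ℕ, q ^ (n + 1) - q ^ (j + 1) = q * (q ^ n - q ^ j) := by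
    intro j
    rw [pow_succ, pow_succ]
    ring
  rw [Finset.prod_congr rfl fun j _ => h j]
  rw [Finset.prod_mul_distrib, Finset.prod_const, Finset.card_range, pow_zero]
  rw [E]
  ring

lemma E_eq_zero {n m : ℕ} (h : n < m) : E n m = 0 :=
  Finset.prod_eq_zero (Finset.mem_range.mpr h) (by rw [sub_self])

/-- Denominator product. -/
def D (k : ℕ) : F2 := qPoch (q ^ 2) (q ^ 2) k * qPoch (a * q) (q ^ 2) k

lemma D_zero : D 0 = 1 := by simp [D, qPoch_zero]

lemma D_succ (k : ℕ) :
    D (k + 1) = D k * ((1 - q ^ (2 * k + 2)) * (1 - a * q ^ (2 * k + 1))) := by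
  unfold D
  rw [qPoch_succ, qPoch_succ]
  have e1 : (1 : F2) - q ^ 2 * (q ^ 2) ^ k = 1 - q ^ (2 * k + 2) := by
    rw [← pow_mul, ← pow_add]; ring_nf
  have e2 : (1 : F2) - a * q * (q ^ 2) ^ k = 1 - a * q ^ (2 * k + 1) := by
    rw [← pow_mul, mul_assoc, ← pow_succ']
  rw [e1, e2]
  ring

lemma D_ne_zero (k : ℕ) : D k ≠ 0 := by
  induction k with
  | zero => rw [D_zero]; exact one_ne_zero
  | succ j ih =>
      rw [D_succ]
      exact mul_ne_zero ih (mul_ne_zero (one_sub_q_pow_ne _ (by omega))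
        (one_sub_a_q_pow_ne _))

/-- Normalized summand. -/
def t' (n k : ℕ) : F2 := E n (2 * k) * a ^ k / D k

/-- Telescoping certificate. -/
def g : ℕ → ℕ → F2
  | _, 0 => 0
  | n, (k + 1) => q ^ n * a ^ (k + 1) * E n (2 * k + 1) / D k

lemma g_zero (n : ℕ) : g n 0 = 0 := rfl
lemma g_succ (n k : ℕ) : g n (k + 1) = q ^ n * a ^ (k + 1) * E n (2 * k + 1) / D k := rfl

/-- The per-`k` telescoping identity (q-Zeilberger certificate). -/
lemma key (n k : ℕ) :
    (1 - a * q ^ n) * t' (n + 1) k - (1 - a * q ^ (2 * n)) * t' n k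
      = g n (k + 1) - g n k := by
  cases k with
  | zero =>
      rw [g_zero, g_succ, t', t', D_zero]
      have hE1 : E (n+1) (2*0) = 1 := by rw [Nat.mul_zero]; exact E_zero _
      have hE2 : E n (2*0) = 1 := by rw [Nat.mul_zero]; exact E_zero _
      rw [hE1, hE2]
      have hE3 : E n (2 * 0 + 1) = q ^ n - 1 := by
        rw [Nat.mul_zero, Nat.zero_add]
        rw [show (1:ℕ) = 0 + 1 from rfl, E_succ, E_zero, pow_zero]
        ring
      rw [hE3]
      have h2n : (q : F2) ^ (2 * n) = q ^ n * q ^ n := by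
        rw [two_mul, pow_add]
      rw [h2n]
      ring
  | succ j =>
      have hDj := D_ne_zero j
      have hDj1 := D_ne_zero (j + 1)
      have e1 : E (n + 1) (2 * (j + 1)) = (q ^ (n+1) - 1) * q ^ (2*j+1) * E n (2*j+1) := by
        rw [show 2 * (j + 1) = (2*j+1) + 1 by omega]
        exact E_shift n (2*j+1)
      have e2 : E n (2 * (j + 1)) = E n (2*j+1) * (q ^ n - q ^ (2*j+1)) := by
        rw [show 2 * (j + 1) = (2*j+1) + 1 by omega]
        exact E_succ n (2*j+1)
      have e3 : E n (2 * (j + 1) + 1)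
          = E n (2*j+1) * (q ^ n - q ^ (2*j+1)) * (q ^ n - q ^ (2*j+2)) := by
        rw [show 2 * (j + 1) + 1 = ((2*j+1) + 1) + 1 by omega]
        rw [E_succ, E_succ]
      rw [t', t', g_succ, g_succ, e1, e2, e3, D_succ]
      -- normalize powers
      have p1 : (q : F2) ^ (n + 1) = q ^ n * q := pow_succ q n
      have p2 : (q : F2) ^ (2 * n) = q ^ n * q ^ n := by rw [two_mul, pow_add]
      have p3 : (q : F2) ^ (2 * j + 2) = q ^ (2*j+1) * q := pow_succ q (2*j+1)
      have p4 : (a : F2) ^ (j + 1 + 1) = a ^ (j+1) * a := pow_succ a (j+1)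
      rw [p1, p2, p3, p4]
      have hf1 := one_sub_q_pow_ne (2*j+2) (by omega)
      have hf2 := one_sub_a_q_pow_ne (2*j+1)
      rw [show (q:F2) ^ (2*j+2) = q ^ (2*j+1) * q from pow_succ q (2*j+1)] at hf1
      have hf1' : (1:F2) - q * q ^ (2*j+1) ≠ 0 := by rw [mul_comm]; exact hf1
      field_simp
      ring

/-- Summed recurrence: `(1 - a q^n) S(n+1) = (1 - a q^{2n}) S(n)`. -/
lemma S_rec (n : ℕ) :
    (1 - a * q ^ n) * (∑ k ∈ Finset.range (n + 2), t' (n + 1) k)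
      = (1 - a * q ^ (2 * n)) * (∑ k ∈ Finset.range (n + 1), t' n k) := by
  have htel : ∑ k ∈ Finset.range (n + 2), (g n (k + 1) - g n k)
      = g n (n + 2) - g n 0 := Finset.sum_range_sub (g n) (n + 2)
  have hsum : ∑ k ∈ Finset.range (n + 2),
      ((1 - a * q ^ n) * t' (n + 1) k - (1 - a * q ^ (2 * n)) * t' n k)
      = g n (n + 2) - g n 0 := by
    rw [← htel]
    exact Finset.sum_congr rfl fun k _ => key n k
  rw [Finset.sum_sub_distrib, ← Finset.mul_sum, ← Finset.mul_sum] at hsum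
  have hg2 : g n (n + 2) = 0 := by
    rw [show n + 2 = (n + 1) + 1 from rfl, g_succ]
    rw [E_eq_zero (show n < 2 * (n + 1) + 1 by omega)]
    simp
  have hlast : t' n (n + 1) = 0 := by
    rw [t', E_eq_zero (show n < 2 * (n + 1) by omega)]
    simp
  have hext : ∑ k ∈ Finset.range (n + 2), t' n k
      = ∑ k ∈ Finset.range (n + 1), t' n k := by
    rw [Finset.sum_range_succ, hlast, add_zero]
  rw [hg2, g_zero, sub_zero, hext] at hsum
  linear_combination hsum

lemma zpow_neg_mul (n : ℕ) : (q : F2) ^ (-(n : ℤ)) = (q ^ n)⁻¹ := by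
  rw [zpow_neg, zpow_natCast]

lemma zpow_one_sub (n : ℕ) : (q : F2) ^ (1 - (n : ℤ)) = q * (q ^ n)⁻¹ := by
  rw [sub_eq_add_neg, zpow_add₀ q_ne_zero, zpow_one, zpow_neg, zpow_natCast]

/-- The paired Pochhammer numerators collapse to `E`. -/
lemma pair (n k : ℕ) :
    qPoch (q ^ (-(n : ℤ))) (q ^ 2) k * qPoch (q ^ (1 - (n : ℤ))) (q ^ 2) k
      * (q ^ (2 * n)) ^ k = E n (2 * k) := by
  induction k with
  | zero => simp [qPoch_zero, E_zero]
  | succ j ih =>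
      have h2 : 2 * (j + 1) = (2 * j + 1) + 1 := by omega
      rw [h2, E_succ, show (2*j+1) = (2*j) + 1 from rfl, E_succ, ← ih]
      rw [qPoch_succ, qPoch_succ, pow_succ ((q:F2) ^ (2*n)) j]
      have hqn : (q : F2) ^ n ≠ 0 := pow_ne_zero n q_ne_zero
      have keyf : (1 - q ^ (-(n : ℤ)) * ((q:F2) ^ 2) ^ j)
          * (1 - q ^ (1 - (n : ℤ)) * ((q:F2) ^ 2) ^ j) * q ^ (2 * n)
          = (q ^ n - q ^ (2 * j)) * (q ^ n - q ^ (2 * j + 1)) := by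
        rw [zpow_neg_mul, zpow_one_sub, ← pow_mul,
          show (q:F2) ^ (2 * n) = q ^ n * q ^ n from by rw [two_mul, pow_add],
          show (q:F2) ^ (2 * j + 1) = q ^ (2*j) * q from pow_succ q (2*j)]
        have hi : (q:F2) ^ n * (q ^ n)⁻¹ = 1 := mul_inv_cancel₀ hqn
        linear_combination (-(q^(2*j)) * q^n - q * q^(2*j) * q^n
          + q * (q^(2*j))^2 * ((q:F2)^n * (q^n)⁻¹ + 1)) * hi
      linear_combination
        (qPoch (q ^ (-(n : ℤ))) (q ^ 2) j * qPoch (q ^ (1 - (n : ℤ))) (q ^ 2) j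
          * ((q:F2) ^ (2 * n)) ^ j) * keyf

lemma term_eq (n k : ℕ) :
    qPoch (q ^ (-(n : ℤ))) (q ^ 2) k * qPoch (q ^ (1 - (n : ℤ))) (q ^ 2) k /
        (qPoch (q ^ 2) (q ^ 2) k * qPoch (a * q) (q ^ 2) k) *
        (a * q ^ (2 * n)) ^ k = t' n k := by
  rw [t', ← pair n k, ← D, mul_pow]
  ring

lemma qPoch_a_q_ne_zero (n : ℕ) : qPoch a q n ≠ 0 := by
  induction n with
  | zero => rw [qPoch_zero]; exact one_ne_zero
  | succ m ih =>
      rw [qPoch_succ]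
      exact mul_ne_zero ih (one_sub_a_q_pow_ne m)

lemma main_aux (n : ℕ) :
    ∑ k ∈ Finset.range (n + 1), t' n k = qPoch a (q ^ 2) n / qPoch a q n := by
  induction n with
  | zero => simp [t', qPoch_zero, E_zero, D_zero]
  | succ m ih =>
      have hrec := S_rec m
      rw [ih] at hrec
      have h1 : (1 : F2) - a * q ^ m ≠ 0 := one_sub_a_q_pow_ne m
      have hQ : qPoch a q m ≠ 0 := qPoch_a_q_ne_zero m
      have hQ1 : qPoch a q (m + 1) ≠ 0 := qPoch_a_q_ne_zero (m + 1)
      rw [eq_div_iff hQ1, qPoch_succ a q m, qPoch_succ a (q ^ 2) m]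
      have hp : a * ((q : F2) ^ 2) ^ m = a * q ^ (2 * m) := by rw [← pow_mul]
      rw [hp]
      have hrec2 : (1 - a * q ^ m) * (∑ k ∈ Finset.range (m + 2), t' (m + 1) k)
          * qPoch a q m = (1 - a * q ^ (2 * m)) * qPoch a (q ^ 2) m := by
        rw [hrec]
        field_simp
      linear_combination hrec2

theorem stmt10 (n : ℕ) :
    ∑ k ∈ Finset.range (n + 1),
      qPoch (q ^ (-(n : ℤ))) (q ^ 2) k * qPoch (q ^ (1 - (n : ℤ))) (q ^ 2) k /
        (qPoch (q ^ 2) (q ^ 2) k * qPoch (a * q) (q ^ 2) k) *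
        (a * q ^ (2 * n)) ^ k
    = qPoch a (q ^ 2) n / qPoch a q n := by
  rw [← main_aux n]
  exact Finset.sum_congr rfl fun k _ => term_eq n k

end
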